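/- Let f ∈ G(Δ) ∩ C_A^3(1) with f(1) = 0 be of the form f(z) = −(1−z)²p(z). Then f is the generator of a semigroup S = {F_t}_{t≥0} consisting of affine self-mappings of Δ if and only if the following two conditions hold: (i) Re p(z) ≥ f'(1)/2 for all z ∈ Δ; (ii) f''(1) = f'''(1) = 0. In this case β := f'(1) ≥ 0 and f(z) = β(z−1). -/

import Mathlib

/-!
Put `h = p - β/2`, so `Re h ≥ 0`. When `f''(1) = f'''(1) = 0`, the third-order expansion of `f`
at `1` says `(1 - r) p(r) = β + o((1 - r)²)` along the radius. Harnack's inequality (Schwarz's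
lemma for a Cayley transform of `h`) with base point `r → 1` shows that `h` dominates the
Herglotz function `β/2 · (1 + z)/(1 - z)`, so `q = p - β/(1 - z)` has `Re q ≥ 0` and
`q(r) = o(1 - r)`. Harnack's inequality with base point `0` then gives `Re q(0) = 0`, and the open
mapping theorem forces `q = 0`, i.e. `f(z) = β(z - 1)`; this generates the affine semigroup
`F_t(z) = 1 + e^{-βt}(z - 1)`.

Conversely, the generator of a semigroup of affine self-maps `z ↦ u_t z + v_t` is affine,
`f(z) = a z + C`, with `Re a ≥ 0` because `|u_t| ≤ 1`. Comparing with the angular expansion at `1`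
gives `a = β`, `C = -β` and `f''(1) = f'''(1) = 0`, and then `p = β/(1 - z)` has `Re p ≥ β/2`.
-/

open Complex Filter Set Metric ComplexConjugate

noncomputable section

/-- The open unit disk in ℂ. -/
def unitDisk : Set ℂ := {z : ℂ | ‖z‖ < 1}

/-- Stolz angle (nontangential approach region) with vertex `ζ` and aperture `k`. -/
def stolzAngle (ζ : ℂ) (k : ℝ) : Set ℂ :=
  {z : ℂ | z ∈ unitDisk ∧ ‖z - ζ‖ < k * (1 - ‖z‖)}

/-- Angular (nontangential) limit of `g` at the boundary point `ζ` equals `L`: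
the limit of `g` within every Stolz angle with vertex `ζ`. -/
def AngularLimAt (g : ℂ → ℂ) (ζ L : ℂ) : Prop :=
  ∀ k : ℝ, 1 < k → Filter.Tendsto g (nhdsWithin ζ (stolzAngle ζ k)) (nhds L)

/-- `g` belongs to `C_A^3(1)` with angular boundary values `a0 = g(1)`, `a1 = g'(1)`,
`a2 = g''(1)`, `a3 = g'''(1)`: the remainder of the third order Taylor expansion at `1`
is `o((z-1)^3)` angularly. -/
def CA3At1 (g : ℂ → ℂ) (a0 a1 a2 a3 : ℂ) : Prop :=
  AngularLimAt (fun z =>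
    (g z - (a0 + a1 * (z - 1) + a2 / 2 * (z - 1) ^ 2 + a3 / 6 * (z - 1) ^ 3)) / (z - 1) ^ 3) 1 0

/-- Holomorphic self-mapping of the unit disk. -/
def HolSelfMap (F : ℂ → ℂ) : Prop :=
  DifferentiableOn ℂ F unitDisk ∧ Set.MapsTo F unitDisk unitDisk

/-- `F` is a linear fractional transformation on the unit disk. -/
def IsLFTOn (F : ℂ → ℂ) : Prop :=
  ∃ a b c d : ℂ, a * d - b * c ≠ 0 ∧ ∀ z ∈ unitDisk, F z = (a * z + b) / (c * z + d)

/-- `F` is a (holomorphic) automorphism of the unit disk. -/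
def IsAutomorphismOfDisk (F : ℂ → ℂ) : Prop :=
  HolSelfMap F ∧ ∃ G : ℂ → ℂ, HolSelfMap G ∧
    (∀ z ∈ unitDisk, G (F z) = z) ∧ (∀ z ∈ unitDisk, F (G z) = z)

/-- The horocycle `D(1,k)` internally tangent to the unit circle at 1. -/
def horocycle (k : ℝ) : Set ℂ :=
  {z : ℂ | z ∈ unitDisk ∧ ‖1 - z‖ ^ 2 / (1 - ‖z‖ ^ 2) < k}

/-- `τ` is the Denjoy–Wolff point of `F`: the iterates converge pointwise to `τ`. -/
def IsDenjoyWolffPt (F : ℂ → ℂ) (τ : ℂ) : Prop :=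
  ∀ z ∈ unitDisk, Filter.Tendsto (fun n : ℕ => F^[n] z) Filter.atTop (nhds τ)

/-- A one-parameter continuous semigroup of holomorphic self-mappings of the disk. -/
def IsSemigroupOnDisk (S : ℝ → ℂ → ℂ) : Prop :=
  (∀ t : ℝ, 0 ≤ t → HolSelfMap (S t)) ∧
  (∀ t : ℝ, 0 ≤ t → ∀ s : ℝ, 0 ≤ s → ∀ z ∈ unitDisk, S (t + s) z = S t (S s z)) ∧
  (∀ z ∈ unitDisk, Filter.Tendsto (fun t : ℝ => S t z) (nhdsWithin 0 (Set.Ioi 0)) (nhds z))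

/-- `f` is the infinitesimal generator of the semigroup `S`. -/
def Generates (f : ℂ → ℂ) (S : ℝ → ℂ → ℂ) : Prop :=
  IsSemigroupOnDisk S ∧
  ∀ z ∈ unitDisk,
    Filter.Tendsto (fun t : ℝ => (z - S t z) / (t : ℂ)) (nhdsWithin 0 (Set.Ioi 0)) (nhds (f z))

/-- `f` belongs to the class `G(Δ)` of infinitesimal generators on the disk. -/
def IsGenerator (f : ℂ → ℂ) : Prop :=
  DifferentiableOn ℂ f unitDisk ∧ ∃ S : ℝ → ℂ → ℂ, Generates f S

/-- `f` generates a one-parameter group of automorphisms of the disk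
(equivalently, both `f` and `-f` are generators). -/
def GeneratesGroupOfAutomorphisms (f : ℂ → ℂ) : Prop :=
  IsGenerator f ∧ IsGenerator (fun z => -f z)

/-- Hyperbolic automorphism of the disk: an automorphism with boundary Denjoy–Wolff point `τ`
and angular derivative `0 < F'(τ) < 1`. -/
def IsHyperbolicAut (F : ℂ → ℂ) : Prop :=
  IsAutomorphismOfDisk F ∧ ∃ τ : ℂ, ‖τ‖ = 1 ∧ IsDenjoyWolffPt F τ ∧
    ∃ α : ℝ, 0 < α ∧ α < 1 ∧ AngularLimAt (fun z => (F z - τ) / (z - τ)) τ (α : ℂ)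

/-- Parabolic automorphism of the disk: an automorphism with boundary Denjoy–Wolff point `τ`
and angular derivative `F'(τ) = 1`. -/
def IsParabolicAut (F : ℂ → ℂ) : Prop :=
  IsAutomorphismOfDisk F ∧ ∃ τ : ℂ, ‖τ‖ = 1 ∧ IsDenjoyWolffPt F τ ∧
    AngularLimAt (fun z => (F z - τ) / (z - τ)) τ 1

open scoped Topology

theorem unitDisk_eq_ball : unitDisk = ball (0 : ℂ) 1 := by
  ext z; simp [unitDisk]

theorem isOpen_unitDisk : IsOpen unitDisk := unitDisk_eq_ball ▸ isOpen_ball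

theorem isPreconnected_unitDisk : IsPreconnected unitDisk :=
  unitDisk_eq_ball ▸ (convex_ball (0 : ℂ) 1).isPreconnected

theorem zero_mem_unitDisk : (0 : ℂ) ∈ unitDisk := by simp [unitDisk]

theorem ofReal_mem_unitDisk {r : ℝ} (h0 : 0 ≤ r) (h1 : r < 1) : (r : ℂ) ∈ unitDisk := by
  simpa [unitDisk, abs_of_nonneg h0] using h1

theorem normSq_lt_one_of_mem_unitDisk {z : ℂ} (hz : z ∈ unitDisk) : normSq z < 1 := by
  rw [← Complex.sq_norm]; exact pow_lt_one₀ (norm_nonneg z) hz two_ne_zero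

theorem one_sub_ne_zero_of_mem_unitDisk {z : ℂ} (hz : z ∈ unitDisk) : 1 - z ≠ 0 := by
  intro h
  rw [← eq_of_sub_eq_zero h] at hz
  simp [unitDisk] at hz

theorem normSq_one_sub_conj_mul_sub_normSq_sub (a z : ℂ) :
    normSq (1 - conj a * z) - normSq (z - a) = (1 - normSq a) * (1 - normSq z) := by
  simp only [normSq_apply, sub_re, sub_im, mul_re, mul_im, conj_re, conj_im, one_re, one_im]
  ring

theorem norm_sub_lt_norm_one_sub_conj_mul {a z : ℂ} (ha : a ∈ unitDisk) (hz : z ∈ unitDisk) :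
    ‖z - a‖ < ‖1 - conj a * z‖ := by
  have hid := normSq_one_sub_conj_mul_sub_normSq_sub a z
  have hpos := mul_pos (sub_pos.2 (normSq_lt_one_of_mem_unitDisk ha))
    (sub_pos.2 (normSq_lt_one_of_mem_unitDisk hz))
  rw [← sq_lt_sq₀ (norm_nonneg _) (norm_nonneg _), Complex.sq_norm, Complex.sq_norm]
  linarith

theorem one_sub_conj_mul_ne_zero {a z : ℂ} (ha : a ∈ unitDisk) (hz : z ∈ unitDisk) :
    1 - conj a * z ≠ 0 :=
  norm_pos_iff.1 ((norm_nonneg _).trans_lt (norm_sub_lt_norm_one_sub_conj_mul ha hz))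

def diskMobius (a z : ℂ) : ℂ := (z - a) / (1 - conj a * z)

theorem diskMobius_mem_unitDisk {a z : ℂ} (ha : a ∈ unitDisk) (hz : z ∈ unitDisk) :
    diskMobius a z ∈ unitDisk := by
  have hlt := norm_sub_lt_norm_one_sub_conj_mul ha hz
  show ‖_‖ < 1
  rw [diskMobius, norm_div, div_lt_one ((norm_nonneg _).trans_lt hlt)]
  exact hlt

theorem differentiableOn_diskMobius {a : ℂ} (ha : a ∈ unitDisk) :
    DifferentiableOn ℂ (diskMobius a) unitDisk :=
  (differentiableOn_id.sub_const a).div ((differentiableOn_const 1).sub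
    (differentiableOn_id.const_mul _)) fun _ hz => one_sub_conj_mul_ne_zero ha hz

theorem diskMobius_neg_zero (a : ℂ) : diskMobius (-a) 0 = a := by simp [diskMobius]

theorem diskMobius_neg_diskMobius {a z : ℂ} (ha : a ∈ unitDisk) (hz : z ∈ unitDisk) :
    diskMobius (-a) (diskMobius a z) = z := by
  have hz' := one_sub_conj_mul_ne_zero ha hz
  have ha' : 1 - conj a * a ≠ 0 := by
    rw [mul_comm, mul_conj, ← ofReal_one, ← ofReal_sub, ofReal_ne_zero]
    exact (sub_pos.2 (normSq_lt_one_of_mem_unitDisk ha)).ne'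
  have hden : 1 - conj a * z + conj a * (z - a) ≠ 0 := by convert ha' using 1; ring
  simp only [diskMobius, map_neg, neg_mul, sub_neg_eq_add]
  rw [div_add' _ _ _ hz', mul_div_assoc', one_add_div hz', div_div_div_cancel_right₀ hz',
    div_eq_iff hden]
  ring

theorem norm_le_norm_diskMobius_of_mapsTo {F : ℂ → ℂ} (hF : DifferentiableOn ℂ F unitDisk)
    (hmaps : MapsTo F unitDisk (closedBall 0 1)) {a z : ℂ} (ha : a ∈ unitDisk) (hFa : F a = 0)
    (hz : z ∈ unitDisk) : ‖F z‖ ≤ ‖diskMobius a z‖ := by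
  have hna : -a ∈ unitDisk := by simpa [unitDisk] using ha
  have hmob : MapsTo (diskMobius (-a)) unitDisk unitDisk := fun _ hw =>
    diskMobius_mem_unitDisk hna hw
  have schwarz := Complex.norm_le_norm_of_mapsTo_ball (f := F ∘ diskMobius (-a))
    (unitDisk_eq_ball ▸ hF.comp (differentiableOn_diskMobius hna) hmob)
    (unitDisk_eq_ball ▸ hmaps.comp hmob) (by simp [diskMobius_neg_zero, hFa])
    (diskMobius_mem_unitDisk ha hz)
  rwa [Function.comp_apply, diskMobius_neg_diskMobius ha hz] at schwarz

theorem mul_sub_sq_le_mul_add_sq_of_sq_mul_le {x y s A B : ℝ} (hx : 0 ≤ x) (hy : 0 ≤ y) (hB : 0 ≤ B)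
    (hBA : B ≤ A) (h : A ^ 2 * ((x - y) ^ 2 + s ^ 2) ≤ B ^ 2 * ((x + y) ^ 2 + s ^ 2)) :
    y * (A ^ 2 - B ^ 2) ≤ x * (A + B) ^ 2 := by
  have hBA2 : B ^ 2 ≤ A ^ 2 := pow_le_pow_left₀ hB hBA 2
  have hsq : (A * (y - x)) ^ 2 ≤ (B * (x + y)) ^ 2 := by
    nlinarith [mul_nonneg (sub_nonneg.2 hBA2) (sq_nonneg s)]
  have hle := (abs_le_of_sq_le_sq' hsq (by positivity)).2
  nlinarith

theorem harnack_re {h : ℂ → ℂ} (hd : DifferentiableOn ℂ h unitDisk)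
    (hre : ∀ w ∈ unitDisk, 0 ≤ (h w).re) {a z : ℂ} (ha : a ∈ unitDisk) (hz : z ∈ unitDisk) :
    (h a).re * ((1 - ‖a‖ ^ 2) * (1 - ‖z‖ ^ 2)) ≤ (h z).re * (‖1 - conj a * z‖ + ‖z - a‖) ^ 2 := by
  set c := h a
  rcases (hre a ha).eq_or_lt with hc | hc
  · rw [← hc, zero_mul]
    exact mul_nonneg (hre z hz) (sq_nonneg _)
  have norm_add_conj_sq (w : ℂ) :
      ‖w + conj c‖ ^ 2 = (w.re + c.re) ^ 2 + (w.im - c.im) ^ 2 := by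
    simp only [Complex.sq_norm, normSq_apply, add_re, add_im, conj_re, conj_im]; ring
  have norm_sub_sq (w : ℂ) : ‖w - c‖ ^ 2 = (w.re - c.re) ^ 2 + (w.im - c.im) ^ 2 := by
    simp only [Complex.sq_norm, normSq_apply, sub_re, sub_im]; ring
  have hden : ∀ w ∈ unitDisk, h w + conj c ≠ 0 := fun w hw hzero => by
    have := congrArg re hzero
    simp only [add_re, conj_re, zero_re] at this
    linarith [hre w hw]
  -- the Cayley transform centred at `c` sends the right half-plane into the closed unit disk
  have hmaps : MapsTo (fun w => (h w - c) / (h w + conj c)) unitDisk (closedBall 0 1) := by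
    intro w hw
    rw [mem_closedBall_zero_iff, norm_div, div_le_one (norm_pos_iff.2 (hden w hw)),
      ← sq_le_sq₀ (norm_nonneg _) (norm_nonneg _), norm_add_conj_sq, norm_sub_sq]
    nlinarith [hre w hw]
  have schwarz := norm_le_norm_diskMobius_of_mapsTo (F := fun w => (h w - c) / (h w + conj c))
    ((hd.sub_const c).div (hd.add_const _) hden) hmaps ha (by simp [c]) hz
  have hA := norm_sub_lt_norm_one_sub_conj_mul ha hz
  rw [diskMobius, norm_div, norm_div,
    div_le_div_iff₀ (norm_pos_iff.2 (hden z hz)) ((norm_nonneg _).trans_lt hA)] at schwarz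
  have hsq := pow_le_pow_left₀ (by positivity) schwarz 2
  rw [mul_pow, mul_pow, norm_add_conj_sq, norm_sub_sq] at hsq
  have hid := normSq_one_sub_conj_mul_sub_normSq_sub a z
  rw [← Complex.sq_norm, ← Complex.sq_norm, ← Complex.sq_norm, ← Complex.sq_norm] at hid
  rw [← hid]
  exact mul_sub_sq_le_mul_add_sq_of_sq_mul_le (s := (h z).im - c.im) (hre z hz) hc.le
    (norm_nonneg _) hA.le (by linarith)

theorem eventually_mem_Ioo_nhdsLT_one : ∀ᶠ r : ℝ in 𝓝[<] 1, r ∈ Ioo 0 1 :=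
  Ioo_mem_nhdsLT one_pos

theorem tendsto_one_sub_ofReal_nhdsLT_one :
    Tendsto (fun r : ℝ => 1 - (r : ℂ)) (𝓝[<] 1) (𝓝 0) :=
  ((continuous_const.sub continuous_ofReal).tendsto' 1 0 (by simp)).mono_left nhdsWithin_le_nhds

theorem re_one_add_div_one_sub (z : ℂ) :
    ((1 + z) / (1 - z)).re = (1 - ‖z‖ ^ 2) / ‖1 - z‖ ^ 2 := by
  rw [div_re, Complex.sq_norm, Complex.sq_norm, ← add_div]
  congr 1
  simp only [normSq_apply, add_re, add_im, sub_re, sub_im, one_re, one_im]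
  ring

theorem re_one_add_div_one_sub_nonneg {z : ℂ} (hz : z ∈ unitDisk) :
    0 ≤ ((1 + z) / (1 - z)).re := by
  rw [re_one_add_div_one_sub]
  exact div_nonneg (sub_nonneg.2 (pow_le_one₀ (norm_nonneg z) hz.le)) (sq_nonneg _)

theorem div_one_sub_eq_add_mul_one_add_div_one_sub (β : ℂ) {z : ℂ} (hz : 1 - z ≠ 0) :
    β / (1 - z) = β / 2 + β / 2 * ((1 + z) / (1 - z)) := by
  field_simp
  ring

theorem le_re_div_one_sub {β : ℝ} (hβ : 0 ≤ β) {z : ℂ} (hz : z ∈ unitDisk) :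
    β / 2 ≤ ((β : ℂ) / (1 - z)).re := by
  rw [div_one_sub_eq_add_mul_one_add_div_one_sub _ (one_sub_ne_zero_of_mem_unitDisk hz)]
  simp only [add_re, mul_re, div_ofNat_re, div_ofNat_im, ofReal_re, ofReal_im]
  nlinarith [re_one_add_div_one_sub_nonneg hz]

theorem AngularLimAt.tendsto_nhdsLT_one {g : ℂ → ℂ} {L : ℂ} (h : AngularLimAt g 1 L) :
    Tendsto (fun r : ℝ => g r) (𝓝[<] 1) (𝓝 L) := by
  refine (h 2 one_lt_two).comp (tendsto_nhdsWithin_iff.2 ⟨?_, ?_⟩)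
  · exact (continuous_ofReal.tendsto' 1 1 ofReal_one).mono_left nhdsWithin_le_nhds
  · filter_upwards [eventually_mem_Ioo_nhdsLT_one] with r hr
    refine ⟨ofReal_mem_unitDisk hr.1.le hr.2, ?_⟩
    rw [← ofReal_one, ← ofReal_sub, norm_real, norm_real, Real.norm_of_nonneg hr.1.le,
      Real.norm_of_nonpos (by linarith [hr.2])]
    linarith [hr.2]

/-- Julia's lemma, in the right half-plane. -/
theorem le_re_of_tendsto_one_sub_mul_re {h : ℂ → ℂ} (hd : DifferentiableOn ℂ h unitDisk)
    (hre : ∀ w ∈ unitDisk, 0 ≤ (h w).re) {β : ℝ}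
    (hlim : Tendsto (fun r : ℝ => (1 - r) * h r) (𝓝[<] 1) (𝓝 (β : ℂ))) {z : ℂ}
    (hz : z ∈ unitDisk) : β / 2 * ((1 + z) / (1 - z)).re ≤ (h z).re := by
  have hlim_re : Tendsto (fun r : ℝ => (1 - r) * (h r).re) (𝓝[<] 1) (𝓝 β) := by
    refine ((continuous_re.tendsto _).comp hlim).congr fun r => ?_
    simp
  have hlhs : Tendsto (fun r : ℝ => (1 - r) * (h r).re * ((1 + r) * (1 - ‖z‖ ^ 2))) (𝓝[<] 1)
      (𝓝 (β * ((1 + 1) * (1 - ‖z‖ ^ 2)))) :=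
    hlim_re.mul ((((continuous_const.add continuous_id).mul continuous_const).tendsto' 1 _
      rfl).mono_left nhdsWithin_le_nhds)
  have hrhs : Tendsto (fun r : ℝ => (h z).re * (‖1 - conj (r : ℂ) * z‖ + ‖z - r‖) ^ 2) (𝓝[<] 1)
      (𝓝 ((h z).re * (‖1 - z‖ + ‖z - 1‖) ^ 2)) :=
    ((by fun_prop : Continuous fun r : ℝ => (h z).re * (‖1 - conj (r : ℂ) * z‖ + ‖z - r‖) ^ 2)
      |>.tendsto' 1 _ (by simp)).mono_left nhdsWithin_le_nhds
  have hle := le_of_tendsto_of_tendsto hlhs hrhs <| by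
    filter_upwards [eventually_mem_Ioo_nhdsLT_one] with r hr
    have harnack := harnack_re hd hre (ofReal_mem_unitDisk hr.1.le hr.2) hz
    rw [norm_real, Real.norm_of_nonneg hr.1.le] at harnack
    linarith
  have hpos : 0 < ‖1 - z‖ ^ 2 := by
    have := one_sub_ne_zero_of_mem_unitDisk hz
    positivity
  rw [norm_sub_rev z 1] at hle
  rw [re_one_add_div_one_sub, ← mul_div_assoc, div_le_iff₀ hpos]
  nlinarith

theorem eqOn_of_re_nonneg_of_re_eq_zero {U : Set ℂ} (hU : IsOpen U) (hU' : IsPreconnected U)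
    {q : ℂ → ℂ} (hd : DifferentiableOn ℂ q U) (hre : ∀ z ∈ U, 0 ≤ (q z).re) {a : ℂ} (ha : a ∈ U)
    (h0 : (q a).re = 0) : EqOn q (fun _ => q a) U := by
  rcases (hd.analyticOnNhd hU).is_constant_or_isOpen hU' with ⟨w, hw⟩ | hopen
  · intro z hz
    simp only [hw z hz, hw a ha]
  -- otherwise `q '' U` is a neighbourhood of `q a`, which sits on the boundary of the half-plane
  obtain ⟨ε, hε, hball⟩ := Metric.isOpen_iff.1 (hopen U subset_rfl hU) (q a) ⟨a, ha, rfl⟩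
  obtain ⟨z, hz, hqz⟩ := hball (show q a - (ε / 2 : ℝ) ∈ ball (q a) ε by
    simp [abs_of_pos hε, hε])
  have := hre z hz
  rw [hqz, sub_re, h0, ofReal_re] at this
  linarith

theorem eqOn_zero_of_re_nonneg_of_tendsto {q : ℂ → ℂ} (hd : DifferentiableOn ℂ q unitDisk)
    (hre : ∀ z ∈ unitDisk, 0 ≤ (q z).re)
    (hlim : Tendsto (fun r : ℝ => q r / (1 - r)) (𝓝[<] 1) (𝓝 0)) : EqOn q 0 unitDisk := by
  have hre0 : (q 0).re ≤ 0 := by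
    have hrhs : Tendsto (fun r : ℝ => (1 + r) * (q r / (1 - r)).re) (𝓝[<] 1) (𝓝 ((1 + 1) * 0)) :=
      (((continuous_const.add continuous_id).tendsto' 1 _ rfl).mono_left nhdsWithin_le_nhds).mul
        ((continuous_re.tendsto 0).comp hlim)
    rw [mul_zero] at hrhs
    refine ge_of_tendsto hrhs ?_
    filter_upwards [eventually_mem_Ioo_nhdsLT_one] with r hr
    have harnack := harnack_re hd hre zero_mem_unitDisk (ofReal_mem_unitDisk hr.1.le hr.2)
    simp only [map_zero, zero_mul, sub_zero, norm_zero, norm_one, norm_real,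
      Real.norm_of_nonneg hr.1.le] at harnack
    rw [← ofReal_one, ← ofReal_sub, div_ofReal_re, mul_div_assoc', le_div_iff₀ (by linarith [hr.2])]
    nlinarith [hr.1, hr.2]
  have hconst := eqOn_of_re_nonneg_of_re_eq_zero isOpen_unitDisk isPreconnected_unitDisk hd hre
    zero_mem_unitDisk (le_antisymm hre0 (hre 0 zero_mem_unitDisk))
  have hq : Tendsto (fun r : ℝ => q r) (𝓝[<] 1) (𝓝 0) := by
    refine (zero_mul (0 : ℂ) ▸ tendsto_one_sub_ofReal_nhdsLT_one.mul hlim).congr' ?_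
    filter_upwards [eventually_mem_Ioo_nhdsLT_one] with r hr
    exact mul_div_cancel₀ _ (one_sub_ne_zero_of_mem_unitDisk (ofReal_mem_unitDisk hr.1.le hr.2))
  have hq0 : q 0 = 0 := by
    refine tendsto_nhds_unique (tendsto_const_nhds.congr' ?_) hq
    filter_upwards [eventually_mem_Ioo_nhdsLT_one] with r hr
    exact (hconst (ofReal_mem_unitDisk hr.1.le hr.2)).symm
  intro z hz
  rw [hconst hz, hq0, Pi.zero_apply]

theorem eqOn_div_one_sub_of_le_re {p : ℂ → ℂ} (hd : DifferentiableOn ℂ p unitDisk) {β : ℝ}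
    (hre : ∀ z ∈ unitDisk, β / 2 ≤ (p z).re)
    (hlim : Tendsto (fun r : ℝ => (p r - β / (1 - r)) / (1 - r)) (𝓝[<] 1) (𝓝 0)) :
    EqOn p (fun z => β / (1 - z)) unitDisk := by
  have hres : Tendsto (fun r : ℝ => (1 - r) * (p r - β / 2)) (𝓝[<] 1) (𝓝 (β : ℂ)) := by
    have hlim' := ((tendsto_const_nhds (x := (β : ℂ))).add
      ((tendsto_one_sub_ofReal_nhdsLT_one.pow 2).mul hlim)).sub
      (tendsto_one_sub_ofReal_nhdsLT_one.mul_const ((β : ℂ) / 2))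
    rw [zero_pow two_ne_zero, zero_mul, zero_mul, add_zero, sub_zero] at hlim'
    refine hlim'.congr' ?_
    filter_upwards [eventually_mem_Ioo_nhdsLT_one] with r hr
    have := one_sub_ne_zero_of_mem_unitDisk (ofReal_mem_unitDisk hr.1.le hr.2)
    field_simp
    ring
  have hq : EqOn (fun z => p z - β / (1 - z)) 0 unitDisk := by
    refine eqOn_zero_of_re_nonneg_of_tendsto (hd.sub ((differentiableOn_const _).div
      ((differentiableOn_const 1).sub differentiableOn_id)
      fun z hz => one_sub_ne_zero_of_mem_unitDisk hz)) (fun z hz => ?_) hlim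
    have hjulia := le_re_of_tendsto_one_sub_mul_re (hd.sub_const _)
      (fun w hw => by simpa using hre w hw) hres hz
    rw [div_one_sub_eq_add_mul_one_add_div_one_sub _ (one_sub_ne_zero_of_mem_unitDisk hz)]
    simp only [sub_re, add_re, mul_re, div_ofNat_re, div_ofNat_im, ofReal_re, ofReal_im]
      at hjulia ⊢
    linarith
  exact fun z hz => sub_eq_zero.1 (hq hz)

theorem eq_zero_and_tendsto_of_tendsto_add_mul_div_pow {𝕜 : Type*} [NormedField 𝕜]
    {l : Filter 𝕜} [l.NeBot] (hl : l ≤ 𝓝[≠] 0) {c L : 𝕜} {R : 𝕜 → 𝕜} (hR : Tendsto R l (𝓝 L))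
    {n : ℕ} (h : Tendsto (fun x => (c + x * R x) / x ^ (n + 1)) l (𝓝 0)) :
    c = 0 ∧ Tendsto (fun x => R x / x ^ n) l (𝓝 0) := by
  have hx : Tendsto id l (𝓝 0) := hl.trans nhdsWithin_le_nhds
  have hne : ∀ᶠ x in l, x ≠ 0 := hl self_mem_nhdsWithin
  have hc : c = 0 := by
    have h₁ := (hx.pow (n + 1)).mul h
    rw [zero_pow n.succ_ne_zero, zero_mul] at h₁
    have h₂ := tendsto_const_nhds (x := c) |>.add (hx.mul hR)
    rw [zero_mul, add_zero] at h₂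
    refine tendsto_nhds_unique (h₂.congr' ?_) h₁
    filter_upwards [hne] with x hx0
    simp only [id]
    field_simp
  refine ⟨hc, h.congr' ?_⟩
  filter_upwards [hne] with x hx0
  rw [hc, zero_add, pow_succ]
  field_simp

theorem eq_zero_of_tendsto_cubic_div_pow_three {𝕜 : Type*} [NormedField 𝕜] {l : Filter 𝕜}
    [l.NeBot] (hl : l ≤ 𝓝[≠] 0) {c₀ c₁ c₂ c₃ : 𝕜}
    (h : Tendsto (fun x => (c₀ + c₁ * x + c₂ * x ^ 2 + c₃ * x ^ 3) / x ^ 3) l (𝓝 0)) :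
    c₀ = 0 ∧ c₁ = 0 ∧ c₂ = 0 ∧ c₃ = 0 := by
  have hx : Tendsto id l (𝓝 0) := hl.trans nhdsWithin_le_nhds
  have hR₂ : Tendsto (fun x => c₁ + c₂ * x + c₃ * x ^ 2) l (𝓝 c₁) := by
    simpa using ((hx.const_mul c₂).const_add c₁).add ((hx.pow 2).const_mul c₃)
  have hR₁ : Tendsto (fun x => c₂ + c₃ * x) l (𝓝 c₂) := by
    simpa using (hx.const_mul c₃).const_add c₂
  obtain ⟨h₀, h⟩ := eq_zero_and_tendsto_of_tendsto_add_mul_div_pow hl (c := c₀) (n := 2) hR₂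
    (by convert h using 3; ring)
  obtain ⟨h₁, h⟩ := eq_zero_and_tendsto_of_tendsto_add_mul_div_pow hl (c := c₁) (n := 1) hR₁
    (by convert h using 3; ring)
  obtain ⟨h₂, h⟩ := eq_zero_and_tendsto_of_tendsto_add_mul_div_pow hl (c := c₂) (n := 0)
    (R := fun _ => c₃) tendsto_const_nhds (by convert h using 3; ring)
  simp only [pow_zero, div_one] at h
  exact ⟨h₀, h₁, h₂, tendsto_nhds_unique tendsto_const_nhds h⟩

theorem CA3At1.eq_of_eqOn_affine {f : ℂ → ℂ} {β : ℝ} {b c a C : ℂ} (hC : CA3At1 f 0 β b c)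
    (haf : ∀ z ∈ unitDisk, f z = a * z + C) : a = β ∧ C = -β ∧ b = 0 ∧ c = 0 := by
  have hl : Tendsto (fun r : ℝ => (r : ℂ) - 1) (𝓝[<] 1) (𝓝[≠] 0) := by
    refine tendsto_nhdsWithin_iff.2 ⟨?_, ?_⟩
    · exact ((continuous_ofReal.sub continuous_const).tendsto' 1 0 (by simp)).mono_left
        nhdsWithin_le_nhds
    · filter_upwards [eventually_mem_Ioo_nhdsLT_one] with r hr
      exact sub_ne_zero.2 (ofReal_ne_one.2 hr.2.ne)
  have hcubic := eq_zero_of_tendsto_cubic_div_pow_three hl (c₀ := a + C) (c₁ := a - β)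
    (c₂ := -(b / 2)) (c₃ := -(c / 6)) <| tendsto_map'_iff.2 <|
      (AngularLimAt.tendsto_nhdsLT_one hC).congr' <| by
        filter_upwards [eventually_mem_Ioo_nhdsLT_one] with r hr
        rw [Function.comp_apply, haf _ (ofReal_mem_unitDisk hr.1.le hr.2)]
        ring
  obtain ⟨h₀, h₁, h₂, h₃⟩ := hcubic
  exact ⟨sub_eq_zero.1 h₁, by linear_combination h₀ - h₁, by linear_combination -2 * h₂,
    by linear_combination -6 * h₃⟩

theorem norm_le_one_of_affine_mem_unitDisk {u v : ℂ} (h : ∀ z ∈ unitDisk, u * z + v ∈ unitDisk) :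
    ‖u‖ ≤ 1 := by
  by_contra! hu
  set z : ℂ := ((‖u‖⁻¹ : ℝ) : ℂ)
  have hz : z ∈ unitDisk :=
    ofReal_mem_unitDisk (inv_nonneg.2 (norm_nonneg u)) (inv_lt_one_of_one_lt₀ hu)
  have h₁ : ‖u * z + v‖ < 1 := h z hz
  have h₂ : ‖u * -z + v‖ < 1 := h (-z) (by simpa [unitDisk] using hz)
  have hdiam : ‖2 * (u * z)‖ = 2 := by
    rw [norm_mul, norm_mul, norm_real, Real.norm_of_nonneg (inv_nonneg.2 (norm_nonneg u)),
      mul_inv_cancel₀ (by positivity)]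
    norm_num
  have := norm_sub_le (u * z + v) (u * -z + v)
  rw [show u * z + v - (u * -z + v) = 2 * (u * z) by ring, hdiam] at this
  linarith

theorem Generates.exists_affine {f : ℂ → ℂ} {S : ℝ → ℂ → ℂ} (hS : Generates f S)
    (haff : ∀ t : ℝ, 0 ≤ t → ∃ u v : ℂ, ∀ z ∈ unitDisk, S t z = u * z + v) :
    ∃ a C : ℂ, 0 ≤ a.re ∧ ∀ z ∈ unitDisk, f z = a * z + C := by
  obtain ⟨⟨hhol, -, -⟩, hgen⟩ := hS
  have hhalf : (1 / 2 : ℂ) ∈ unitDisk := by norm_num [unitDisk]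
  -- an affine map is determined by its values at `0` and `1/2`
  have hS_eq : ∀ t, 0 ≤ t → ∀ z ∈ unitDisk, S t z = 2 * (S t (1 / 2) - S t 0) * z + S t 0 := by
    intro t ht z hz
    obtain ⟨u, v, huv⟩ := haff t ht
    rw [huv z hz, huv _ hhalf, huv 0 zero_mem_unitDisk]
    ring
  have hpos : ∀ᶠ t in 𝓝[>] (0 : ℝ), 0 < t := self_mem_nhdsWithin
  have hslope : Tendsto (fun t : ℝ => (1 - 2 * (S t (1 / 2) - S t 0)) / t) (𝓝[>] 0)
      (𝓝 (2 * (f (1 / 2) - f 0))) :=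
    (((hgen _ hhalf).sub (hgen 0 zero_mem_unitDisk)).const_mul 2).congr fun t => by ring
  refine ⟨2 * (f (1 / 2) - f 0), f 0, ge_of_tendsto ((continuous_re.tendsto _).comp hslope) ?_,
    fun z hz => ?_⟩
  · filter_upwards [hpos] with t ht
    have hu := norm_le_one_of_affine_mem_unitDisk fun z hz =>
      hS_eq t ht.le z hz ▸ (hhol t ht.le).2 hz
    rw [Function.comp_apply, div_ofReal_re, sub_re, one_re]
    exact div_nonneg (sub_nonneg.2 ((re_le_norm _).trans hu)) ht.le
  · have hlim : Tendsto (fun t : ℝ => (z - S t z) / t) (𝓝[>] 0) (𝓝 (f 0 + _ * z)) :=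
      ((hgen 0 zero_mem_unitDisk).add (hslope.mul_const z)).congr' <| by
        filter_upwards [hpos] with t ht
        rw [hS_eq t ht.le z hz]
        ring
    rw [tendsto_nhds_unique (hgen z hz) hlim]
    ring

def affineFlow (β t : ℝ) (z : ℂ) : ℂ := 1 + Real.exp (-(β * t)) * (z - 1)

theorem affineFlow_zero (β : ℝ) (z : ℂ) : affineFlow β 0 z = z := by simp [affineFlow]

theorem affineFlow_add (β t s : ℝ) (z : ℂ) :
    affineFlow β (t + s) z = affineFlow β t (affineFlow β s z) := by
  simp only [affineFlow, mul_add, neg_add, Real.exp_add, ofReal_mul]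
  ring

theorem mapsTo_affineFlow {β t : ℝ} (hβ : 0 ≤ β) (ht : 0 ≤ t) :
    MapsTo (affineFlow β t) unitDisk unitDisk := by
  intro z hz
  set x := Real.exp (-(β * t))
  have hx₀ : 0 < x := Real.exp_pos _
  have hx₁ : x ≤ 1 := Real.exp_le_one_iff.2 (neg_nonpos.2 (mul_nonneg hβ ht))
  have hz' : ‖z‖ < 1 := hz
  show ‖1 + (x : ℂ) * (z - 1)‖ < 1
  calc ‖1 + (x : ℂ) * (z - 1)‖ = ‖((1 - x : ℝ) : ℂ) + x * z‖ := by push_cast; ring_nf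
    _ ≤ (1 - x) + x * ‖z‖ := by
      refine (norm_add_le _ _).trans_eq ?_
      rw [norm_real, norm_mul, norm_real, Real.norm_of_nonneg (sub_nonneg.2 hx₁),
        Real.norm_of_nonneg hx₀.le]
    _ < 1 := by nlinarith

theorem hasDerivAt_affineFlow (β : ℝ) (z : ℂ) :
    HasDerivAt (fun t => affineFlow β t z) (-(β * (z - 1))) 0 := by
  simpa [affineFlow] using
    ((((hasDerivAt_id (0 : ℝ)).const_mul β).neg.exp.ofReal_comp).mul_const (z - 1)).const_add 1

theorem generates_affineFlow {β : ℝ} (hβ : 0 ≤ β) :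
    Generates (fun z => β * (z - 1)) (affineFlow β) := by
  refine ⟨⟨fun t ht => ⟨?_, mapsTo_affineFlow hβ ht⟩, fun t _ s _ z _ => affineFlow_add β t s z,
    fun z _ => ?_⟩, fun z _ => ?_⟩
  · unfold affineFlow
    fun_prop
  · simpa only [affineFlow_zero] using
      (hasDerivAt_affineFlow β z).continuousAt.tendsto.mono_left nhdsWithin_le_nhds
  · have hslope := (hasDerivAt_affineFlow β z).tendsto_slope_zero_right.neg
    rw [neg_neg] at hslope
    refine hslope.congr fun t => ?_
    rw [zero_add, affineFlow_zero, real_smul, ofReal_inv]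
    ring

theorem Generates.congr {f g : ℂ → ℂ} {S : ℝ → ℂ → ℂ} (h : Generates f S)
    (hfg : EqOn f g unitDisk) : Generates g S :=
  ⟨h.1, fun z hz => hfg hz ▸ h.2 z hz⟩

theorem neg_one_sub_sq_mul_eq_iff {z w : ℂ} (β : ℂ) (hz : 1 - z ≠ 0) :
    -(1 - z) ^ 2 * w = β * (z - 1) ↔ w = β / (1 - z) := by
  rw [eq_div_iff hz]
  constructor
  · intro h
    refine mul_left_cancel₀ hz ?_
    linear_combination -h
  · intro h
    linear_combination -(1 - z) * h

theorem CA3At1.eq_mul_sub_one_of_le_re {f p : ℂ → ℂ} (hf : DifferentiableOn ℂ f unitDisk) {β : ℝ}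
    (hC : CA3At1 f 0 β 0 0) (hp : ∀ z ∈ unitDisk, f z = -(1 - z) ^ 2 * p z)
    (hre : ∀ z ∈ unitDisk, β / 2 ≤ (p z).re) :
    0 ≤ β ∧ ∀ z ∈ unitDisk, f z = β * (z - 1) := by
  have hpd : DifferentiableOn ℂ p unitDisk := by
    refine (hf.neg.div (((differentiableOn_const 1).sub differentiableOn_id).pow 2)
      fun z hz => pow_ne_zero 2 (one_sub_ne_zero_of_mem_unitDisk hz)).congr fun z hz => ?_
    show p z = -f z / (1 - z) ^ 2
    rw [hp z hz]
    field_simp [one_sub_ne_zero_of_mem_unitDisk hz]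
  have hpeq := eqOn_div_one_sub_of_le_re hpd hre <|
    (AngularLimAt.tendsto_nhdsLT_one hC).congr' <| by
      filter_upwards [eventually_mem_Ioo_nhdsLT_one] with r hr
      have hr' := ofReal_mem_unitDisk hr.1.le hr.2
      have hr₁ := one_sub_ne_zero_of_mem_unitDisk hr'
      have hr₂ : (r : ℂ) - 1 ≠ 0 := sub_ne_zero.2 (ofReal_ne_one.2 hr.2.ne)
      rw [hp _ hr']
      field_simp
      ring
  refine ⟨by simpa [hpeq zero_mem_unitDisk] using hre 0 zero_mem_unitDisk, fun z hz => ?_⟩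
  rw [hp z hz, neg_one_sub_sq_mul_eq_iff _ (one_sub_ne_zero_of_mem_unitDisk hz)]
  exact hpeq hz

theorem CA3At1.le_re_of_generates_affine {f p : ℂ → ℂ} {β : ℝ} {b c : ℂ}
    (hC : CA3At1 f 0 β b c) (hp : ∀ z ∈ unitDisk, f z = -(1 - z) ^ 2 * p z)
    {S : ℝ → ℂ → ℂ} (hS : Generates f S)
    (haff : ∀ t : ℝ, 0 ≤ t → ∃ u v : ℂ, ∀ z ∈ unitDisk, S t z = u * z + v) :
    (∀ z ∈ unitDisk, β / 2 ≤ (p z).re) ∧ b = 0 ∧ c = 0 := by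
  obtain ⟨a, C, ha, hfa⟩ := hS.exists_affine haff
  obtain ⟨rfl, rfl, rfl, rfl⟩ := hC.eq_of_eqOn_affine hfa
  refine ⟨fun z hz => ?_, rfl, rfl⟩
  have hz' := one_sub_ne_zero_of_mem_unitDisk hz
  have hpz := (neg_one_sub_sq_mul_eq_iff _ hz').1 <| (hp z hz).symm.trans <| by
    rw [hfa z hz]; ring
  rw [hpz]
  exact le_re_div_one_sub (by simpa using ha) hz

theorem stmt12 (f : ℂ → ℂ) (hf : IsGenerator f)
    (β : ℝ) (b c : ℂ) (hC : CA3At1 f 0 (β : ℂ) b c)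
    (p : ℂ → ℂ) (hp : ∀ z ∈ unitDisk, f z = -(1 - z) ^ 2 * p z) :
    ((∃ S : ℝ → ℂ → ℂ, Generates f S ∧
        ∀ t : ℝ, 0 ≤ t → ∃ u v : ℂ, ∀ z ∈ unitDisk, S t z = u * z + v) ↔
      ((∀ z ∈ unitDisk, β / 2 ≤ (p z).re) ∧ b = 0 ∧ c = 0)) ∧
    (((∀ z ∈ unitDisk, β / 2 ≤ (p z).re) ∧ b = 0 ∧ c = 0) →
      0 ≤ β ∧ ∀ z ∈ unitDisk, f z = (β : ℂ) * (z - 1)) := by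
  have hrigid : ((∀ z ∈ unitDisk, β / 2 ≤ (p z).re) ∧ b = 0 ∧ c = 0) →
      0 ≤ β ∧ ∀ z ∈ unitDisk, f z = (β : ℂ) * (z - 1) := by
    rintro ⟨hre, rfl, rfl⟩
    exact hC.eq_mul_sub_one_of_le_re hf.1 hp hre
  refine ⟨⟨fun ⟨S, hS, haff⟩ => hC.le_re_of_generates_affine hp hS haff, fun hcond => ?_⟩,
    hrigid⟩
  obtain ⟨hβ, hfeq⟩ := hrigid hcond
  refine ⟨affineFlow β, (generates_affineFlow hβ).congr fun z hz => (hfeq z hz).symm,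
    fun t _ => ⟨Real.exp (-(β * t)), 1 - Real.exp (-(β * t)), fun z _ => ?_⟩⟩
  rw [affineFlow]
  ring
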